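/- Let y_{12}, y_{13}, y_{23|1} ∈ (−1, 1) and define ρ^{12} = y_{12}, ρ^{13} = y_{13} and ρ^{23} = y_{23|1} √((1−y_{12}²)(1−y_{13}²)) + y_{12} y_{13}. Then the 3×3 real symmetric matrix ρ with unit diagonal and off-diagonal entries ρ^{12}, ρ^{13}, ρ^{23} is positive definite; in particular, it is a correlation matrix, and moreover ρ^{23} ∈ (−1, 1). -/

import Mathlib

/-!
The correlation matrix is `ρ = L Lᵀ` for the lower-triangular matrix `L = cvineCholeskyFactor`,
whose rows are unit vectors and whose diagonal entries `1`, `√(1 - y₁₂²)`,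
`√(1 - y₁₃²) √(1 - y₂₃∣₁²)` are positive. Hence `L` is invertible and `ρ` is positive definite;
`|ρ²³| < 1` is then the positivity of the principal `2 × 2` minor on the indices `2, 3`.
-/

open Matrix

theorem Matrix.PosDef.sq_apply_lt_mul_diag {n : Type*} [Fintype n] {A : Matrix n n ℝ}
    (hA : A.PosDef) {i j : n} (hij : i ≠ j) : A i j ^ 2 < A i i * A j j := by
  have hinj : Function.Injective ![i, j] := by
    intro a b h
    fin_cases a <;> fin_cases b <;> simp_all [eq_comm]
  have hdet := (hA.submatrix hinj).det_pos
  rw [det_fin_two] at hdet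
  have hsymm : A j i = A i j := hA.isHermitian.apply i j
  simp only [submatrix_apply, cons_val_zero, cons_val_one, hsymm] at hdet
  linarith

noncomputable def cvineCholeskyFactor (y12 y13 y231 : ℝ) : Matrix (Fin 3) (Fin 3) ℝ :=
  !![1, 0, 0;
     y12, √(1 - y12 ^ 2), 0;
     y13, y231 * √(1 - y13 ^ 2), √(1 - y13 ^ 2) * √(1 - y231 ^ 2)]

theorem cvineCholeskyFactor_mul_transpose {y12 y13 y231 : ℝ} (h12 : y12 ∈ Set.Icc (-1 : ℝ) 1)
    (h13 : y13 ∈ Set.Icc (-1 : ℝ) 1) (h231 : y231 ∈ Set.Icc (-1 : ℝ) 1) :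
    cvineCholeskyFactor y12 y13 y231 * (cvineCholeskyFactor y12 y13 y231)ᵀ =
      !![1, y12, y13;
        y12, 1, y231 * √((1 - y12 ^ 2) * (1 - y13 ^ 2)) + y12 * y13;
        y13, y231 * √((1 - y12 ^ 2) * (1 - y13 ^ 2)) + y12 * y13, 1] := by
  have sq_sqrt_one_sub {y : ℝ} (hy : y ∈ Set.Icc (-1 : ℝ) 1) : √(1 - y ^ 2) ^ 2 = 1 - y ^ 2 :=
    Real.sq_sqrt (by nlinarith [hy.1, hy.2])
  rw [Real.sqrt_mul (by nlinarith [h12.1, h12.2])]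
  ext i j
  fin_cases i <;> fin_cases j <;>
    simp [cvineCholeskyFactor, mul_apply, Fin.sum_univ_three] <;>
    nlinarith [sq_sqrt_one_sub h12, sq_sqrt_one_sub h13, sq_sqrt_one_sub h231]

theorem det_cvineCholeskyFactor (y12 y13 y231 : ℝ) :
    (cvineCholeskyFactor y12 y13 y231).det =
      √(1 - y12 ^ 2) * (√(1 - y13 ^ 2) * √(1 - y231 ^ 2)) := by
  simp [cvineCholeskyFactor, det_fin_three]

theorem isUnit_cvineCholeskyFactor {y12 y13 y231 : ℝ} (h12 : y12 ∈ Set.Ioo (-1 : ℝ) 1)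
    (h13 : y13 ∈ Set.Ioo (-1 : ℝ) 1) (h231 : y231 ∈ Set.Ioo (-1 : ℝ) 1) :
    IsUnit (cvineCholeskyFactor y12 y13 y231) := by
  have sqrt_one_sub_pos {y : ℝ} (hy : y ∈ Set.Ioo (-1 : ℝ) 1) : 0 < √(1 - y ^ 2) :=
    Real.sqrt_pos.2 (by nlinarith [hy.1, hy.2])
  rw [isUnit_iff_isUnit_det, det_cvineCholeskyFactor, isUnit_iff_ne_zero]
  have := sqrt_one_sub_pos h12
  have := sqrt_one_sub_pos h13
  have := sqrt_one_sub_pos h231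
  positivity

/-- The C-vine parameterization in dimension 3: for partial correlations
`y₁₂, y₁₃, y₂₃∣₁ ∈ (-1,1)`, setting `ρ²³ = y₂₃∣₁ √((1-y₁₂²)(1-y₁₃²)) + y₁₂ y₁₃`, the
3×3 symmetric matrix with unit diagonal and off-diagonal entries `y₁₂, y₁₃, ρ²³` is
positive definite (hence a correlation matrix), and `ρ²³ ∈ (-1,1)`. -/
theorem cvine_3d_posDef
    (y12 y13 y231 : ℝ)
    (h12 : y12 ∈ Set.Ioo (-1 : ℝ) 1) (h13 : y13 ∈ Set.Ioo (-1 : ℝ) 1)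
    (h231 : y231 ∈ Set.Ioo (-1 : ℝ) 1) :
    (!![1, y12, y13;
        y12, 1, y231 * Real.sqrt ((1 - y12 ^ 2) * (1 - y13 ^ 2)) + y12 * y13;
        y13, y231 * Real.sqrt ((1 - y12 ^ 2) * (1 - y13 ^ 2)) + y12 * y13, 1] :
      Matrix (Fin 3) (Fin 3) ℝ).PosDef ∧
    y231 * Real.sqrt ((1 - y12 ^ 2) * (1 - y13 ^ 2)) + y12 * y13 ∈ Set.Ioo (-1 : ℝ) 1 := by
  have hρ := PosDef.mul_conjTranspose_self _
    (vecMul_injective_iff_isUnit.2 (isUnit_cvineCholeskyFactor h12 h13 h231))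
  rw [conjTranspose_eq_transpose_of_trivial, cvineCholeskyFactor_mul_transpose
    (Set.Ioo_subset_Icc_self h12) (Set.Ioo_subset_Icc_self h13) (Set.Ioo_subset_Icc_self h231)] at hρ
  refine ⟨hρ, ?_⟩
  simpa [abs_lt] using hρ.sq_apply_lt_mul_diag (i := 1) (j := 2) (by decide)
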